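/- arXiv:1111.4988 — 9 statements merged into one kernel-verified Lean document; each statement's English description precedes it below -/
import Mathlib

section
/- Let p be an odd prime. For any integer k with 1 ≤ k ≤ p-1, we have k * binom(2k,k) * binom(2(p-k), p-k) ≡ (-1)^(⌊2k/p⌋ - 1) * 2p (mod p^2). -/
/-!
For `2k < p` put `m = p - k`. Since `m < p ≤ 2m`, the prime `p` divides `C(2m, m)` exactly once,
and both `C(2m, m) / p` and `C(2k, k)` can be read off modulo `p` from factorials: `(2m)! / p`
is `-(p - 2k)!` by Wilson's theorem, and Wilson in the form `j! (p - j)! ≡ (-1)^j j` pairs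
`k!` with `m!` and `(2k)!` with `(p - 2k)!`. This gives `k C(2k, k) C(2m, m) / p ≡ -2`, i.e.
`k C(2k, k) C(2m, m) ≡ -2p (mod p²)`. For `2k > p` apply this to `p - k`: as `p ∣ C(2k, k)`,
replacing the factor `k` by `p - k` only flips the sign modulo `p²`.
-/

open Nat

namespace ZMod

variable {p : ℕ} [Fact p.Prime]

theorem factorial_mul_factorial_sub {j : ℕ} (hj0 : 0 < j) (hjp : j ≤ p) :
    (j ! * (p - j)! : ZMod p) = (-1) ^ j * j := by
  obtain ⟨i, rfl⟩ := Nat.exists_eq_add_of_le' hj0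
  have h := congrArg (Nat.cast : ℕ → ZMod p)
    (factorial_mul_descFactorial (n := p - 1) (k := i) (by omega))
  push_cast at h
  rw [cast_descFactorial (by omega), wilsons_lemma, show p - 1 - i = p - (i + 1) by omega] at h
  have hs : ((-1 : ZMod p) ^ i) ^ 2 = 1 := by rw [← pow_mul, pow_mul', neg_one_sq, one_pow]
  rw [factorial_succ, pow_succ]
  push_cast
  linear_combination (i + 1 : ZMod p) * (-1) ^ i * h
    - (i + 1 : ZMod p) * (i ! : ZMod p) * (p - (i + 1))! * hs

theorem exists_factorial_add_eq_prime_mul (d : ℕ) :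
    ∃ r, (p + d)! = p * r ∧ (r : ZMod p) = -d ! := by
  refine ⟨(p - 1)! * (p + 1).ascFactorial d, ?_, ?_⟩
  · rw [← factorial_mul_ascFactorial, ← mul_factorial_pred (Fact.out : p.Prime).ne_zero, mul_assoc]
  · rw [Nat.cast_mul, wilsons_lemma, Nat.cast_ascFactorial, Nat.cast_add, natCast_self, zero_add,
      Nat.cast_one, ascPochhammer_eval_one, neg_one_mul]

theorem exists_choose_eq_prime_mul_of_two_mul_lt {k : ℕ} (hk : 0 < k) (hkp : 2 * k < p) :
    ∃ q, (2 * (p - k)).choose (p - k) = p * q ∧ (k * (2 * k).choose k * q : ZMod p) = -2 := by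
  have hp : p.Prime := Fact.out
  set m := p - k
  obtain ⟨q, hq⟩ : p ∣ (2 * m).choose m := by
    rw [two_mul]; exact hp.dvd_choose_add (by omega) (by omega) (by omega)
  refine ⟨q, hq, ?_⟩
  obtain ⟨r, hr, hr'⟩ := exists_factorial_add_eq_prime_mul (p := p) (p - 2 * k)
  rw [show p + (p - 2 * k) = 2 * m by omega] at hr
  have hqr : (q * (m ! * m !) : ZMod p) = -(p - 2 * k)! := by
    rw [← hr']
    have h : q * (m ! * m !) = r := by
      refine Nat.eq_of_mul_eq_mul_left hp.pos ?_
      rw [← hr, ← mul_assoc, ← hq, ← mul_assoc, two_mul, add_choose_mul_factorial_mul_factorial]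
    exact_mod_cast congrArg (Nat.cast : ℕ → ZMod p) h
  have hCk : ((2 * k).choose k * (k ! * k !) : ZMod p) = (2 * k)! := by
    rw [← mul_assoc, two_mul]
    exact_mod_cast congrArg (Nat.cast : ℕ → ZMod p) (add_choose_mul_factorial_mul_factorial k k)
  have hkm : (k ! * m ! : ZMod p) = (-1) ^ k * k := factorial_mul_factorial_sub hk (by omega)
  have h2k : ((2 * k)! * (p - 2 * k)! : ZMod p) = 2 * k := by
    rw [factorial_mul_factorial_sub (by omega) hkp.le, pow_mul, neg_one_sq, one_pow, one_mul]
    push_cast; ring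
  have hs : ((-1 : ZMod p) ^ k) ^ 2 = 1 := by rw [← pow_mul, pow_mul', neg_one_sq, one_pow]
  have hk0 : (k : ZMod p) ^ 2 ≠ 0 :=
    pow_ne_zero 2 ((natCast_eq_zero_iff k p).not.mpr (Nat.not_dvd_of_pos_of_lt hk (by omega)))
  -- multiply through by the unit `k² = (k! m!)²` so that only factorial identities remain
  refine mul_left_cancel₀ hk0 ?_
  calc (k : ZMod p) ^ 2 * (k * (2 * k).choose k * q : ZMod p)
      = (k * (2 * k).choose k * q : ZMod p) * ((-1) ^ k * k) ^ 2 := by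
        linear_combination (-k ^ 2 * k * (2 * k).choose k * q : ZMod p) * hs
    _ = (k * ((2 * k).choose k * (k ! * k !)) * (q * (m ! * m !)) : ZMod p) := by rw [← hkm]; ring
    _ = k * (2 * k)! * -(p - 2 * k)! := by rw [hCk, hqr]
    _ = k ^ 2 * -2 := by linear_combination (-k : ZMod p) * h2k

end ZMod

section

variable {p : ℕ} [Fact p.Prime]

theorem mul_choose_mul_choose_modEq_neg_of_two_mul_lt {k : ℕ} (hk : 0 < k) (hkp : 2 * k < p) :
    (k : ℤ) * (2 * k).choose k * (2 * (p - k)).choose (p - k) ≡ -(2 * p) [ZMOD p ^ 2] := by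
  obtain ⟨q, hq, hkq⟩ := ZMod.exists_choose_eq_prime_mul_of_two_mul_lt hk hkp
  have h : (k * (2 * k).choose k * q : ℤ) ≡ -2 [ZMOD p] := by
    rw [← ZMod.intCast_eq_intCast_iff]; push_cast; exact hkq
  rw [hq, sq]
  push_cast
  calc (k * (2 * k).choose k * (p * q) : ℤ) = p * (k * (2 * k).choose k * q) := by ring
    _ ≡ p * -2 [ZMOD p * p] := h.mul_left' (c := p)
    _ = -(2 * p) := by ring

theorem mul_choose_mul_choose_modEq_of_lt_two_mul {k : ℕ} (hkp : k < p) (hpk : p < 2 * k) :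
    (k : ℤ) * (2 * k).choose k * (2 * (p - k)).choose (p - k) ≡ 2 * p [ZMOD p ^ 2] := by
  have h := mul_choose_mul_choose_modEq_neg_of_two_mul_lt (p := p) (k := p - k) (by omega)
    (by omega)
  rw [Nat.sub_sub_self hkp.le, Nat.cast_sub hkp.le] at h
  obtain ⟨c, hc⟩ : p ∣ (2 * k).choose k := by
    rw [two_mul]; exact (Fact.out : p.Prime).dvd_choose_add hkp hkp (by omega)
  have h0 : (p * (2 * (p - k)).choose (p - k) * (2 * k).choose k : ℤ) ≡ 0 [ZMOD p ^ 2] :=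
    Int.modEq_zero_iff_dvd.mpr ⟨(2 * (p - k)).choose (p - k) * c, by rw [hc]; push_cast; ring⟩
  calc (k : ℤ) * (2 * k).choose k * (2 * (p - k)).choose (p - k)
      = p * (2 * (p - k)).choose (p - k) * (2 * k).choose k
        - (p - k) * (2 * (p - k)).choose (p - k) * (2 * k).choose k := by ring
    _ ≡ 0 - -(2 * p) [ZMOD p ^ 2] := h0.sub h
    _ = 2 * p := by ring

end

/-- For an odd prime `p` and `1 ≤ k ≤ p-1`,
`k * C(2k,k) * C(2(p-k), p-k) ≡ (-1)^(⌊2k/p⌋ - 1) * 2 * p (mod p^2)`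
as a congruence between integers. -/
theorem sun_lemma_2_1 (p : ℕ) (hp : p.Prime) (hodd : Odd p) (k : ℕ)
    (hk1 : 1 ≤ k) (hk2 : k ≤ p - 1) :
    ((k : ℤ) * ((2 * k).choose k : ℤ) * ((2 * (p - k)).choose (p - k) : ℤ))
      ≡ (((2 * k / p : ℤ) - 1).negOnePow : ℤ) * 2 * (p : ℤ) [ZMOD (p : ℤ) ^ 2] := by
  have := Fact.mk hp
  have hkp : 2 * k ≠ p := by rintro rfl; exact Nat.not_odd_iff_even.mpr (even_two_mul k) hodd
  rcases hkp.lt_or_gt with hkp | hpk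
  · have hq : (2 * k / p : ℤ) = 0 := Int.ediv_eq_zero_of_lt (by positivity) (by exact_mod_cast hkp)
    rw [hq, zero_sub, Int.negOnePow_neg, Int.negOnePow_one]
    simpa using mul_choose_mul_choose_modEq_neg_of_two_mul_lt hk1 hkp
  · have hq : (2 * k / p : ℤ) = 1 := by
      rw [Int.ediv_eq_iff_of_pos (by exact_mod_cast hp.pos)]; omega
    rw [hq, sub_self, Int.negOnePow_zero]
    simpa using mul_choose_mul_choose_modEq_of_lt_two_mul (by omega) hpk
end

section
/- Let p = 2n+1 be an odd prime. For any integer k with 1 ≤ k ≤ p-1 (in particular for 1 ≤ k ≤ n), we have binom(n,k) * binom(n+k,k) ≡ binom(2k,k)^2 / (-16)^k (mod p^2). -/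
/-!
Write `p = 2n + 1`, `a_k = (-16)^k C(n,k) C(n+k,k)` and `b_k = C(2k,k)^2`. Both satisfy a
first-order recurrence: `(k+1)^2 a_{k+1} = -16 (n-k)(n+k+1) a_k` and
`(k+1)^2 b_{k+1} = 4 (2k+1)^2 b_k`. Since `4 (n-k)(n+k+1) = p^2 - (2k+1)^2`, the two
multipliers agree modulo `p^2`, so `a_k ≡ b_k (mod p^2)` propagates by induction as long as
`k + 1` is invertible modulo `p`, i.e. for all `k < p`. The rational form follows because
the denominator `(-16)^k` is prime to `p`.
-/

lemma Int.choose_succ_right_mul (n k : ℕ) :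
    (n.choose (k + 1) : ℤ) * (k + 1) = n.choose k * (n - k) := by
  rcases le_or_gt k n with hk | hk
  · have h := Nat.choose_succ_right_eq n k
    zify [hk] at h
    exact h
  · simp [Nat.choose_eq_zero_of_lt hk, Nat.choose_eq_zero_of_lt (Nat.lt_succ_of_lt hk)]

lemma Int.sq_succ_mul_choose_mul_choose_succ (n k : ℕ) :
    ((k : ℤ) + 1) ^ 2 * ((n.choose (k + 1) : ℤ) * (n + (k + 1)).choose (k + 1))
      = (n - k) * (n + k + 1) * ((n.choose k : ℤ) * (n + k).choose k) := by
  have hsucc : ((n + k + 1).choose (k + 1) : ℤ) * (k + 1) = (n + k + 1) * (n + k).choose k := by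
    exact_mod_cast (Nat.add_one_mul_choose_eq (n + k) k).symm
  calc ((k : ℤ) + 1) ^ 2 * ((n.choose (k + 1) : ℤ) * (n + (k + 1)).choose (k + 1))
      = ((n.choose (k + 1) : ℤ) * (k + 1)) * ((n + k + 1).choose (k + 1) * (k + 1)) := by
        rw [← add_assoc]; ring
    _ = (n - k) * (n + k + 1) * ((n.choose k : ℤ) * (n + k).choose k) := by
        rw [Int.choose_succ_right_mul, hsucc]; ring

lemma Int.succ_mul_centralBinom_succ (k : ℕ) :
    ((k : ℤ) + 1) * (2 * (k + 1)).choose (k + 1) = 2 * (2 * k + 1) * (2 * k).choose k := by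
  exact_mod_cast Nat.succ_mul_centralBinom_succ k

theorem sq_dvd_neg_sixteen_pow_mul_choose_mul_choose_sub {n k : ℕ} (hp : (2 * n + 1).Prime)
    (hk : k < 2 * n + 1) : (2 * n + 1 : ℤ) ^ 2 ∣
      (-16) ^ k * ((n.choose k : ℤ) * (n + k).choose k) - ((2 * k).choose k : ℤ) ^ 2 := by
  induction k with
  | zero => simp
  | succ k ih =>
    set a := (-16 : ℤ) ^ k * ((n.choose k : ℤ) * (n + k).choose k)
    set b := ((2 * k).choose k : ℤ) ^ 2
    set a' := (-16 : ℤ) ^ (k + 1) * ((n.choose (k + 1) : ℤ) * (n + (k + 1)).choose (k + 1))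
    set b' := ((2 * (k + 1)).choose (k + 1) : ℤ) ^ 2
    have ha : ((k : ℤ) + 1) ^ 2 * a' = (4 * (2 * k + 1) ^ 2 - 4 * (2 * n + 1) ^ 2) * a := by
      linear_combination (-16 : ℤ) ^ (k + 1) * Int.sq_succ_mul_choose_mul_choose_succ n k
    have hb : ((k : ℤ) + 1) ^ 2 * b' = 4 * (2 * k + 1) ^ 2 * b := by
      rw [← mul_pow, Int.succ_mul_centralBinom_succ]
      ring
    have hdvd : (2 * n + 1 : ℤ) ^ 2 ∣ ((k : ℤ) + 1) ^ 2 * (a' - b') := by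
      rw [show ((k : ℤ) + 1) ^ 2 * (a' - b')
          = 4 * (2 * k + 1) ^ 2 * (a - b) - (2 * n + 1) ^ 2 * (4 * a) by
        linear_combination ha - hb]
      exact dvd_sub (dvd_mul_of_dvd_right (ih (by omega)) _) (dvd_mul_right _ _)
    have hcop : IsCoprime (2 * n + 1 : ℤ) ((k : ℤ) + 1) := by
      exact_mod_cast Nat.isCoprime_iff_coprime.mpr
        (Nat.coprime_of_lt_prime k.succ_ne_zero hk hp)
    exact hcop.pow.dvd_of_dvd_mul_left hdvd

theorem Rat.dvd_num_div_of_dvd {m a b : ℤ} (hmb : IsCoprime m b) (hma : m ∣ a) :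
    m ∣ ((a : ℚ) / b).num := by
  rcases eq_or_ne b 0 with rfl | hb
  · exact (isCoprime_zero_right.mp hmb).dvd
  have hcross : ((a : ℚ) / b).num * b = a * ((a : ℚ) / b).den := by
    have h : (((a : ℚ) / b).num : ℚ) * b = a * ((a : ℚ) / b).den := by
      rw [← Rat.mul_den_eq_num]
      field_simp
    exact_mod_cast h
  exact hmb.dvd_of_dvd_mul_right (hcross ▸ hma.mul_right _)

theorem sun_lemma_2_1b_general (p n : ℕ) (hp : p.Prime) (hpn : p = 2 * n + 1) (k : ℕ)
    (hk2 : k ≤ p - 1) :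
    (p : ℤ) ^ 2 ∣
      (((n.choose k : ℚ) * ((n + k).choose k : ℚ))
        - ((2 * k).choose k : ℚ) ^ 2 / (-16 : ℚ) ^ k).num := by
  subst hpn
  have hrat : ((n.choose k : ℚ) * ((n + k).choose k : ℚ))
        - ((2 * k).choose k : ℚ) ^ 2 / (-16 : ℚ) ^ k
      = (((-16) ^ k * ((n.choose k : ℤ) * (n + k).choose k) - ((2 * k).choose k : ℤ) ^ 2 : ℤ)
          : ℚ) / (((-16) ^ k : ℤ) : ℚ) := by
    push_cast
    field_simp
  have hcop : IsCoprime ((2 * n + 1 : ℕ) : ℤ) (-16) := by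
    have h2 : IsCoprime ((2 * n + 1 : ℕ) : ℤ) 2 := ⟨1, -n, by push_cast; ring⟩
    simpa using (h2.pow_right (n := 4)).neg_right
  rw [hrat]
  exact Rat.dvd_num_div_of_dvd hcop.pow
    (by exact_mod_cast sq_dvd_neg_sixteen_pow_mul_choose_mul_choose_sub hp (by omega))

/-- Let `p = 2n+1` be an odd prime. For `1 ≤ k ≤ p-1`,
`C(n,k) * C(n+k,k) ≡ C(2k,k)^2 / (-16)^k (mod p^2)`, where the congruence
between rationals means `p^2` divides the numerator of the difference
written in lowest terms. -/
theorem sun_lemma_2_1b (p n : ℕ) (hp : p.Prime) (hpn : p = 2 * n + 1) (k : ℕ)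
    (hk1 : 1 ≤ k) (hk2 : k ≤ p - 1) :
    (p : ℤ) ^ 2 ∣
      (((n.choose k : ℚ) * ((n + k).choose k : ℚ))
        - ((2 * k).choose k : ℚ) ^ 2 / (-16 : ℚ) ^ k).num :=
  sun_lemma_2_1b_general p n hp hpn k hk2
end

section
/- For every positive integer n, the sum over k from 1 to n of binom(n,k)*binom(n+k,k)*((-1)^k/k)*(H_{n+k} - H_{n-k}) equals (5/2) times the sum over k from 1 to n of (-1)^k * binom(2k,k) / k^2, plus 2*H_n^{(2)}, where H_m = sum_{j=1}^m 1/j and H_m^{(2)} = sum_{j=1}^m 1/j^2. -/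
/-!
Write `F(n, k)` for the summand on the left. By creative telescoping (Zeilberger's algorithm) there
is a hypergeometric-times-harmonic certificate `G(m, k)` with
`F(n + 1, k) - F(n, k) = G(n + 1, k + 1) - G(n + 1, k)` for `1 ≤ k ≤ n`. Summing over `k` gives
`∑ₖ F(n + 1, k) - ∑ₖ F(n, k) = F(m, m) + G(m, m) - G(m, 1)` with `m = n + 1`, and the two boundary
terms evaluate to `5/2 · (-1)^m C(2m, m) / m²` and `2 / m²`: exactly the increments of the right
hand side, so the identity follows by induction on `n`.
-/

open Finset

theorem choose_mul_choose_add_succ_right {R : Type*} [CommRing R] {m k : ℕ} (hk : k ≤ m) :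
    (m.choose (k + 1) * (m + k + 1).choose (k + 1) : R) * (k + 1) ^ 2
      = m.choose k * (m + k).choose k * (m - k) * (m + k + 1) := by
  have h₁ : (m.choose (k + 1) * (k + 1) : R) = m.choose k * (m - k) := by
    simpa [Nat.cast_sub hk] using congrArg (Nat.cast (R := R)) (Nat.choose_succ_right_eq m k)
  have h₂ : ((m + k + 1).choose (k + 1) * (k + 1) : R) = (m + k + 1) * (m + k).choose k := by
    simpa using congrArg (Nat.cast (R := R)) (Nat.add_one_mul_choose_eq (m + k) k).symm
  linear_combination ((m + k + 1).choose (k + 1) * (k + 1) : R) * h₁ + m.choose k * (m - k) * h₂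

theorem choose_mul_choose_add_succ_left {R : Type*} [CommRing R] [IsDomain R] [CharZero R]
    {n k : ℕ} (hk : k ≤ n + 1) :
    (n.choose k * (n + k).choose k : R) * (n + 1 + k)
      = (n + 1).choose k * (n + 1 + k).choose k * (n + 1 - k) := by
  have h₁ : (n.choose k * (n + 1) : R) = (n + 1).choose k * (n + 1 - k) := by
    simpa [Nat.cast_sub hk] using congrArg (Nat.cast (R := R)) (Nat.choose_mul_succ_eq n k)
  have h₂ : ((n + k).choose k * (n + 1 + k) : R) = (n + 1 + k).choose k * (n + 1) := by
    have := congrArg (Nat.cast (R := R)) (Nat.choose_mul_succ_eq (n + k) k)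
    rw [show n + k + 1 - k = n + 1 by omega, show n + k + 1 = n + 1 + k by omega] at this
    push_cast at this
    linear_combination this
  have hn : (n + 1 : R) ≠ 0 := by exact_mod_cast n.succ_ne_zero
  apply mul_right_cancel₀ hn
  linear_combination ((n + k).choose k : R) * (n + 1 + k) * h₁ + (n + 1).choose k * (n + 1 - k) * h₂

def sunSummand (n k : ℕ) : ℚ :=
  n.choose k * (n + k).choose k * ((-1) ^ k / k) * (harmonic (n + k) - harmonic (n - k))

def sunCertificate (m k : ℕ) : ℚ :=
  m.choose k * (m + k).choose k * ((-1) ^ (k + 1) * 2 * k ^ 2 / (m ^ 2 * (m + k)))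
    * (harmonic (m + k - 1) - harmonic (m - k) - 2 / m)

theorem sunSummand_succ_sub_sunSummand {n k : ℕ} (hk₀ : 1 ≤ k) (hkn : k ≤ n) :
    sunSummand (n + 1) k - sunSummand n k
      = sunCertificate (n + 1) (k + 1) - sunCertificate (n + 1) k := by
  have hH₁ : harmonic (n + 1 + k) = harmonic (n + k) + 1 / (n + 1 + k) := by
    rw [show n + 1 + k = n + k + 1 by omega, harmonic_succ]; push_cast; ring
  have hH₂ : harmonic (n + 1 - k) = harmonic (n - k) + 1 / (n + 1 - k) := by
    rw [show n + 1 - k = n - k + 1 by omega, harmonic_succ, Nat.cast_add, Nat.cast_sub hkn]; ring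
  have hk : (k : ℚ) + 1 ≤ n + 1 := by exact_mod_cast Nat.succ_le_succ hkn
  have hk' : (1 : ℚ) ≤ k := by exact_mod_cast hk₀
  have hc₁ : ((n + 1).choose (k + 1) * (n + 1 + k + 1).choose (k + 1) : ℚ)
      = (n + 1).choose k * (n + 1 + k).choose k * (n + 1 - k) * (n + 1 + k + 1) / (k + 1) ^ 2 := by
    rw [eq_div_iff (by positivity), choose_mul_choose_add_succ_right (by omega)]; push_cast; ring
  have hc₂ : (n.choose k * (n + k).choose k : ℚ)
      = (n + 1).choose k * (n + 1 + k).choose k * (n + 1 - k) / (n + 1 + k) := by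
    rw [eq_div_iff (by positivity), choose_mul_choose_add_succ_left (by omega)]
  simp only [sunSummand, sunCertificate]
  rw [show n + 1 + (k + 1) - 1 = n + 1 + k by omega, show n + 1 - (k + 1) = n - k by omega,
    show n + 1 + k - 1 = n + k by omega, show n + 1 + (k + 1) = n + 1 + k + 1 by omega, hH₁, hH₂]
  push_cast
  -- everything is now rational in `n`, `k`, `H(n + k)`, `H(n - k)` and `C(n + 1, k) C(n + 1 + k, k)`
  rw [hc₁, hc₂]
  have : (n : ℚ) + 1 - k ≠ 0 := by linarith
  field_simp
  ring

theorem sunSummand_add_sunCertificate_self (m : ℕ) :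
    sunSummand m m + sunCertificate m m = 5 / 2 * ((-1) ^ m * (2 * m).choose m / m ^ 2) := by
  rcases m with _ | n
  · simp [sunSummand, sunCertificate]
  simp only [sunSummand, sunCertificate, Nat.sub_self, Nat.choose_self, harmonic_zero,
    show n + 1 + (n + 1) = 2 * n + 1 + 1 by omega,
    show 2 * (n + 1) = 2 * n + 1 + 1 by omega, harmonic_succ (2 * n + 1)]
  push_cast
  field_simp
  ring

theorem sunCertificate_one (m : ℕ) : sunCertificate m 1 = -2 / m ^ 2 := by
  rcases m with _ | n
  · simp [sunCertificate]
  simp only [sunCertificate, Nat.choose_one_right, show n + 1 + 1 - 1 = n + 1 by omega,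
    Nat.add_sub_cancel, harmonic_succ n]
  push_cast
  field_simp
  ring

theorem sum_sunSummand_succ (n : ℕ) :
    ∑ k ∈ Icc 1 (n + 1), sunSummand (n + 1) k
      = ∑ k ∈ Icc 1 n, sunSummand n k
        + 5 / 2 * ((-1) ^ (n + 1) * (2 * (n + 1)).choose (n + 1) / (n + 1 : ℕ) ^ 2)
        + 2 / (n + 1 : ℕ) ^ 2 := by
  have htel : ∑ k ∈ Icc 1 n, (sunSummand (n + 1) k - sunSummand n k)
      = sunCertificate (n + 1) (n + 1) - sunCertificate (n + 1) 1 := by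
    rw [← Ico_add_one_right_eq_Icc, ← sum_Ico_sub _ (by omega)]
    refine sum_congr rfl fun k hk => ?_
    rw [mem_Ico] at hk
    exact sunSummand_succ_sub_sunSummand hk.1 (by omega)
  rw [sum_Icc_succ_top (by omega), ← sunSummand_add_sunCertificate_self]
  rw [sum_sub_distrib] at htel
  linear_combination htel - sunCertificate_one (n + 1)

theorem sum_Icc_one_div_eq_harmonic (t : ℕ) : ∑ j ∈ Icc 1 t, (1 : ℚ) / j = harmonic t := by
  simp only [harmonic_eq_sum_Icc, one_div]

theorem sun_lemma_2_3b_general (n : ℕ) :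
    (∑ k ∈ Finset.Icc 1 n,
        (n.choose k : ℚ) * ((n + k).choose k : ℚ) * ((-1 : ℚ) ^ k / (k : ℚ))
          * ((∑ j ∈ Finset.Icc 1 (n + k), (1 : ℚ) / (j : ℚ))
              - (∑ j ∈ Finset.Icc 1 (n - k), (1 : ℚ) / (j : ℚ))))
      = (5 / 2) * (∑ k ∈ Finset.Icc 1 n, (-1 : ℚ) ^ k * ((2 * k).choose k : ℚ) / (k : ℚ) ^ 2)
        + 2 * (∑ j ∈ Finset.Icc 1 n, (1 : ℚ) / (j : ℚ) ^ 2) := by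
  simp only [sum_Icc_one_div_eq_harmonic]
  change ∑ k ∈ Icc 1 n, sunSummand n k = _
  induction n with
  | zero => simp
  | succ n ih =>
    rw [sum_sunSummand_succ, ih, sum_Icc_succ_top (by omega), sum_Icc_succ_top (by omega)]
    ring

/-- For every positive integer `n`,
`∑_{k=1}^n C(n,k)*C(n+k,k)*((-1)^k/k)*(H_{n+k} - H_{n-k})
  = (5/2) * ∑_{k=1}^n (-1)^k * C(2k,k) / k^2 + 2 * H_n^{(2)}`,
where `H_m = ∑_{j=1}^m 1/j` and `H_m^{(2)} = ∑_{j=1}^m 1/j^2`. -/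
theorem sun_lemma_2_3b (n : ℕ) (hn : 0 < n) :
    (∑ k ∈ Finset.Icc 1 n,
        (n.choose k : ℚ) * ((n + k).choose k : ℚ) * ((-1 : ℚ) ^ k / (k : ℚ))
          * ((∑ j ∈ Finset.Icc 1 (n + k), (1 : ℚ) / (j : ℚ))
              - (∑ j ∈ Finset.Icc 1 (n - k), (1 : ℚ) / (j : ℚ))))
      = (5 / 2) * (∑ k ∈ Finset.Icc 1 n, (-1 : ℚ) ^ k * ((2 * k).choose k : ℚ) / (k : ℚ) ^ 2)
        + 2 * (∑ j ∈ Finset.Icc 1 n, (1 : ℚ) / (j : ℚ) ^ 2) :=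
  sun_lemma_2_3b_general n
end

section
/- For every positive integer n, the sum over k from 0 to n of ((-1)^k / (2k+1)^2) * binom(n,k) * binom(n+k,k) equals 1/(2n+1)^2 + (2/(2n+1)) times the sum over k from 0 to n-1 of 1/(2k+1). -/
/-!
Write `S n` for the left-hand side and `T n = ∑ₖ (-1)^k C(n+1,k) C(n+k,k) / (2k+1)`.
The contiguous relations `C(n,k) (n+1) = C(n+1,k) (n+1-k)` (also applied to `C(n+k,k)`) give,
term by term, `(2n+3) S (n+1) = (2n+1) S n + 2 T n`, and in the same way
`(n+1)(2n+5) T (n+1) = (n+2)(2n+1) T n + (2n+3) ∑ₖ (-1)^k C(n+2,k) C(n+k,k)`.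
The last sum is the `(n+2)`-nd forward difference of the degree-`n` polynomial `x ↦ C(x+n,n)`,
hence vanishes; induction on `n` then gives `T n = (2n+2)/((2n+1)(2n+3))` and the
closed form of `S n`.
-/

open Finset

theorem fwdDiff_iter_choose_eq_zero_of_lt {r M : ℕ} (h : r < M) :
    (fwdDiff 1)^[M] (fun x ↦ x.choose r : ℕ → ℤ) = 0 := by
  obtain ⟨d, rfl⟩ := Nat.exists_eq_add_of_lt h
  have hr := fwdDiff_iter_choose 0 r
  rw [r.add_zero] at hr
  rw [show r + d + 1 = d + 1 + r by ring, Function.iterate_add_apply, hr,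
    Function.iterate_succ_apply]
  simp only [Nat.choose_zero_right, Nat.cast_one, fwdDiff_const]
  exact Function.iterate_fixed (fwdDiff_const 1 0) d

theorem alternating_sum_choose_mul_add_choose_eq_zero {r M : ℕ} (h : r < M) :
    ∑ k ∈ range (M + 1), (-1 : ℤ) ^ k * M.choose k * (r + k).choose k = 0 := by
  have hΔ := congrFun (fwdDiff_iter_choose_eq_zero_of_lt h) r
  rw [fwdDiff_iter_eq_sum_shift, Pi.zero_apply] at hΔ
  have hsign : ∀ k ∈ range (M + 1), (-1 : ℤ) ^ k = (-1) ^ M * (-1) ^ (M - k) := by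
    intro k hk
    obtain ⟨j, rfl⟩ := Nat.exists_eq_add_of_le (Nat.lt_succ_iff.mp (mem_range.mp hk))
    rw [Nat.add_sub_cancel_left, pow_add, mul_assoc, ← pow_add, ← two_mul, pow_mul]
    simp
  rw [← mul_zero ((-1 : ℤ) ^ M), ← hΔ, mul_sum]
  refine sum_congr rfl fun k hk ↦ ?_
  rw [hsign k hk, smul_eq_mul, smul_eq_mul, mul_one, Nat.choose_symm_add]
  ring

theorem Nat.cast_choose_mul_add_one {R : Type*} [CommRing R] (n k : ℕ) :
    (n.choose k : R) * (n + 1) = (n + 1).choose k * (n + 1 - k) := by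
  rcases le_or_gt k (n + 1) with hk | hk
  · have h := congrArg (Nat.cast (R := R)) (Nat.choose_mul_succ_eq n k)
    push_cast [Nat.cast_sub hk] at h
    exact h
  · simp [Nat.choose_eq_zero_of_lt hk, Nat.choose_eq_zero_of_lt (Nat.lt_of_succ_lt hk)]

section CharZero

variable {K : Type*} [Field K] [CharZero K]

theorem Nat.cast_choose_eq_choose_succ_mul_div (n k : ℕ) :
    (n.choose k : K) = (n + 1).choose k * (n + 1 - k) / (n + 1) := by
  rw [eq_div_iff (by norm_cast), Nat.cast_choose_mul_add_one]

theorem Nat.cast_succ_add_choose_eq_choose_mul_div (n k : ℕ) :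
    ((n + 1 + k).choose k : K) = (n + k).choose k * (n + k + 1) / (n + 1) := by
  have h := Nat.cast_choose_mul_add_one (R := K) (n + k) k
  rw [Nat.add_right_comm] at h
  push_cast at h
  rw [eq_div_iff (by norm_cast), h]
  ring

theorem alternating_choose_mul_choose_div_succ (n k : ℕ) : ((n : K) + 1) * (2 * n + 5) *
        ((-1) ^ k * (n + 2).choose k * (n + 1 + k).choose k / (2 * k + 1))
      = (n + 2) * (2 * n + 1) * ((-1) ^ k * (n + 1).choose k * (n + k).choose k / (2 * k + 1))
        + (2 * n + 3) * ((-1) ^ k * (n + 2).choose k * (n + k).choose k) := by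
  rw [Nat.cast_choose_eq_choose_succ_mul_div (n + 1), Nat.cast_succ_add_choose_eq_choose_mul_div]
  push_cast
  field_simp (disch := norm_cast)
  ring

theorem alternating_choose_mul_choose_div_sq_succ (n k : ℕ) : (2 * (n : K) + 3) *
        ((-1) ^ k * (n + 1).choose k * (n + 1 + k).choose k / (2 * k + 1) ^ 2)
      = (2 * n + 1) * ((-1) ^ k * n.choose k * (n + k).choose k / (2 * k + 1) ^ 2)
        + 2 * ((-1) ^ k * (n + 1).choose k * (n + k).choose k / (2 * k + 1)) := by
  rw [Nat.cast_choose_eq_choose_succ_mul_div n, Nat.cast_succ_add_choose_eq_choose_mul_div]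
  field_simp (disch := norm_cast)
  ring

theorem sum_alternating_choose_mul_choose_div (n : ℕ) :
    ∑ k ∈ range (n + 2), (-1 : K) ^ k * (n + 1).choose k * (n + k).choose k / (2 * k + 1)
      = (2 * n + 2) / ((2 * n + 1) * (2 * n + 3)) := by
  induction n with
  | zero => norm_num [sum_range_succ]
  | succ n ih =>
    have hzero :
        ∑ k ∈ range (n + 3), (-1 : K) ^ k * (n + 2).choose k * (n + k).choose k = 0 := by
      exact_mod_cast alternating_sum_choose_mul_add_choose_eq_zero (show n < n + 2 by omega)
    have hprev : ∑ k ∈ range (n + 3),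
        (-1 : K) ^ k * (n + 1).choose k * (n + k).choose k / (2 * k + 1)
          = (2 * n + 2) / ((2 * n + 1) * (2 * n + 3)) := by
      rw [sum_range_succ, ih, Nat.choose_succ_self]
      simp only [Nat.cast_zero, mul_zero, zero_mul, zero_div, add_zero]
    have hstep := sum_congr rfl fun k (_ : k ∈ range (n + 3)) ↦
      alternating_choose_mul_choose_div_succ (K := K) n k
    rw [← mul_sum, sum_add_distrib, ← mul_sum, ← mul_sum, hprev, hzero] at hstep
    rw [eq_div_of_mul_eq (by norm_cast) ((mul_comm _ _).trans hstep)]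
    push_cast
    field_simp (disch := norm_cast)
    ring

theorem sum_alternating_choose_mul_choose_div_sq (n : ℕ) :
    ∑ k ∈ range (n + 1), (-1 : K) ^ k * n.choose k * (n + k).choose k / (2 * k + 1) ^ 2
      = 1 / (2 * n + 1) ^ 2 + 2 / (2 * n + 1) * ∑ k ∈ range n, 1 / (2 * k + 1 : K) := by
  induction n with
  | zero => simp
  | succ n ih =>
    have hprev : ∑ k ∈ range (n + 2),
        (-1 : K) ^ k * n.choose k * (n + k).choose k / (2 * k + 1) ^ 2
          = 1 / (2 * n + 1) ^ 2 + 2 / (2 * n + 1) * ∑ k ∈ range n, 1 / (2 * k + 1 : K) := by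
      rw [sum_range_succ, ih, Nat.choose_succ_self]
      simp only [Nat.cast_zero, mul_zero, zero_mul, zero_div, add_zero]
    have hstep := sum_congr rfl fun k (_ : k ∈ range (n + 2)) ↦
      alternating_choose_mul_choose_div_sq_succ (K := K) n k
    rw [← mul_sum, sum_add_distrib, ← mul_sum, ← mul_sum, hprev,
      sum_alternating_choose_mul_choose_div] at hstep
    rw [eq_div_of_mul_eq (by norm_cast) ((mul_comm _ _).trans hstep), sum_range_succ]
    push_cast
    field_simp (disch := norm_cast)
    ring

end CharZero

theorem sun_lemma_3_1b_general (n : ℕ) :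
    (∑ k ∈ Finset.range (n + 1),
        ((-1 : ℚ) ^ k / ((2 * k + 1 : ℕ) : ℚ) ^ 2) * (n.choose k : ℚ) * ((n + k).choose k : ℚ))
      = 1 / ((2 * n + 1 : ℕ) : ℚ) ^ 2
        + (2 / ((2 * n + 1 : ℕ) : ℚ)) * (∑ k ∈ Finset.range n, (1 : ℚ) / ((2 * k + 1 : ℕ) : ℚ)) := by
  push_cast
  rw [← sum_alternating_choose_mul_choose_div_sq]
  exact sum_congr rfl fun k _ ↦ by ring

/-- For every positive integer `n`,
`∑_{k=0}^n ((-1)^k/(2k+1)^2) * C(n,k) * C(n+k,k)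
  = 1/(2n+1)^2 + (2/(2n+1)) * ∑_{k=0}^{n-1} 1/(2k+1)`. -/
theorem sun_lemma_3_1b (n : ℕ) (hn : 0 < n) :
    (∑ k ∈ Finset.range (n + 1),
        ((-1 : ℚ) ^ k / ((2 * k + 1 : ℕ) : ℚ) ^ 2) * (n.choose k : ℚ) * ((n + k).choose k : ℚ))
      = 1 / ((2 * n + 1 : ℕ) : ℚ) ^ 2
        + (2 / ((2 * n + 1 : ℕ) : ℚ)) * (∑ k ∈ Finset.range n, (1 : ℚ) / ((2 * k + 1 : ℕ) : ℚ)) :=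
  sun_lemma_3_1b_general n
end

section
/- Let p > 3 be a prime. Then the sum over k from 1 to p-1 of binom(2k,k)^2 / (k^2 * 16^k) is congruent to -2*H_{(p-1)/2}^2 modulo p^2, where H_n = sum_{j=1}^n 1/j. -/
/-!
Write `p = 2m + 1`. For `k ≤ m`,
`(-1)^k C(m,k) C(m+k,k) · 4^k k!² = ∏_{j<k} ((2j+1)² - p²) ≡ ∏_{j<k} (2j+1)²`
`= C(2k,k)² k!² / 4^k` modulo `p²`, while for `m < k < p` the prime `p` divides `C(2k,k)`.
Hence, `p`-adically to order two, the sum equals `∑_{k=1}^m (-1)^k C(m,k) C(m+k,k) / k²`, and this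
is exactly `-2 H_m²`: by induction on `m`, using the telescoping sum
`∑_{k=1}^{m+1} (-1)^k C(m+1,k) C(m+k,k) = -1`.
-/

open Finset
open scoped Nat

namespace SunCongruence

lemma cast_choose_succ_mul (n k : ℕ) :
    ((n + 1).choose (k + 1) : ℚ) * (k + 1) = (n + 1) * n.choose k := by
  exact_mod_cast (Nat.add_one_mul_choose_eq n k).symm

lemma cast_choose_succ_right_mul {n k : ℕ} (hk : k ≤ n) :
    (n.choose (k + 1) : ℚ) * (k + 1) = n.choose k * (n - k) := by
  exact_mod_cast Nat.choose_succ_right_eq n k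

lemma cast_choose_mul_succ {n k : ℕ} (hk : k ≤ n + 1) :
    (n.choose k : ℚ) * (n + 1) = (n + 1).choose k * (n + 1 - k) := by
  exact_mod_cast Nat.choose_mul_succ_eq n k

lemma choose_succ_mul_choose_succ {n j : ℕ} (hj : j ≤ n) :
    ((n + 1).choose (j + 1) : ℚ) * (n + j + 1).choose (j + 1) =
      n.choose (j + 1) * (n + j + 2).choose (j + 1) + n.choose j * (n + j + 1).choose j := by
  have h₁ := cast_choose_succ_mul n j
  have h₂ := cast_choose_succ_right_mul hj
  have h₃ := cast_choose_succ_right_mul (by omega : j ≤ n + j + 1)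
  have h₄ := cast_choose_succ_mul (n + j + 1) j
  rw [show n + j + 1 + 1 = n + j + 2 by rfl] at h₄
  push_cast at h₃ h₄
  apply mul_right_cancel₀ (pow_ne_zero 2 (Nat.cast_add_one_ne_zero j : (j : ℚ) + 1 ≠ 0))
  linear_combination
    ((n + j + 1).choose (j + 1) * (j + 1) : ℚ) * h₁ + (n + 1) * n.choose j * h₃
    - ((n + j + 2).choose (j + 1) * (j + 1) : ℚ) * h₂ - n.choose j * (n - j) * h₄

lemma sum_Icc_neg_one_pow_mul_choose_mul_choose {n J : ℕ} (hJ : J ≤ n + 1) :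
    ∑ k ∈ Icc 1 J, (-1 : ℚ) ^ k * (n + 1).choose k * (n + k).choose k =
      (-1) ^ J * n.choose J * (n + J + 1).choose J - 1 := by
  induction J with
  | zero => simp
  | succ J ih =>
    rw [sum_Icc_succ_top (by omega), ih (by omega)]
    linear_combination (-1 : ℚ) ^ (J + 1) * choose_succ_mul_choose_succ (by omega : J ≤ n)

/-- The coefficient of `x ^ k` in the Legendre polynomial `P_n (1 - 2x)`. -/
def legendreCoeff (n k : ℕ) : ℚ := (-1) ^ k * n.choose k * (n + k).choose k

lemma legendreCoeff_of_lt {n k : ℕ} (h : n < k) : legendreCoeff n k = 0 := by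
  simp [legendreCoeff, Nat.choose_eq_zero_of_lt h]

lemma mul_legendreCoeff {n k : ℕ} (hk : k ≤ n + 1) :
    (n + 1) * legendreCoeff n k =
      (n + 1 - k) * ((-1) ^ k * (n + 1).choose k * (n + k).choose k) := by
  rw [legendreCoeff]
  linear_combination (-1 : ℚ) ^ k * (n + k).choose k * cast_choose_mul_succ hk

lemma mul_legendreCoeff_succ {n k : ℕ} (hk : k ≤ n + 1) :
    (n + 1) * legendreCoeff (n + 1) k =
      (n + 1) * legendreCoeff n k + 2 * k * ((-1) ^ k * (n + 1).choose k * (n + k).choose k) := by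
  have h := cast_choose_mul_succ (by omega : k ≤ n + k + 1)
  rw [show n + k + 1 = n + 1 + k by ring] at h
  push_cast at h
  rw [legendreCoeff]
  linear_combination -(-1 : ℚ) ^ k * (n + 1).choose k * h - mul_legendreCoeff hk

lemma legendreCoeff_succ_div {n k : ℕ} (hk₀ : 0 < k) (hk : k ≤ n + 1) :
    legendreCoeff (n + 1) k / k = legendreCoeff n k / k
      + 2 / (n + 1) * ((-1) ^ k * (n + 1).choose k * (n + k).choose k) := by
  field_simp
  linear_combination mul_legendreCoeff_succ hk

lemma legendreCoeff_succ_div_sq {n k : ℕ} (hk₀ : 0 < k) (hk : k ≤ n + 1) :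
    legendreCoeff (n + 1) k / k ^ 2 = legendreCoeff n k / k ^ 2
      + 2 / (n + 1) * (legendreCoeff n k / k)
      + 2 / (n + 1) ^ 2 * ((-1) ^ k * (n + 1).choose k * (n + k).choose k) := by
  field_simp
  linear_combination (n + 1 : ℚ) * mul_legendreCoeff_succ hk - 2 * k * mul_legendreCoeff hk

theorem sum_legendreCoeff_div (n : ℕ) :
    ∑ k ∈ Icc 1 n, legendreCoeff n k / k = -2 * harmonic n := by
  induction n with
  | zero => simp
  | succ n ih =>
    rw [sum_congr rfl fun k hk => legendreCoeff_succ_div (mem_Icc.1 hk).1 (mem_Icc.1 hk).2,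
      sum_add_distrib, ← mul_sum, sum_Icc_neg_one_pow_mul_choose_mul_choose le_rfl,
      sum_Icc_succ_top (by omega), legendreCoeff_of_lt (by omega), ih, harmonic_succ]
    push_cast [Nat.choose_succ_self]
    field_simp
    ring

theorem sum_legendreCoeff_div_sq (n : ℕ) :
    ∑ k ∈ Icc 1 n, legendreCoeff n k / k ^ 2 = -2 * harmonic n ^ 2 := by
  induction n with
  | zero => simp
  | succ n ih =>
    rw [sum_congr rfl fun k hk => legendreCoeff_succ_div_sq (mem_Icc.1 hk).1 (mem_Icc.1 hk).2,
      sum_add_distrib, sum_add_distrib, ← mul_sum, ← mul_sum,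
      sum_Icc_neg_one_pow_mul_choose_mul_choose le_rfl,
      sum_Icc_succ_top (by omega), sum_Icc_succ_top (by omega), legendreCoeff_of_lt (by omega), ih,
      sum_legendreCoeff_div, harmonic_succ]
    push_cast [Nat.choose_succ_self]
    field_simp
    ring

lemma centralBinom_mul_factorial (k : ℕ) :
    (2 * k).choose k * k ! = 2 ^ k * ∏ j ∈ range k, (2 * j + 1) := by
  induction k with
  | zero => simp
  | succ k ih =>
    have h := Nat.succ_mul_centralBinom_succ k
    rw [Nat.centralBinom_eq_two_mul_choose, Nat.centralBinom_eq_two_mul_choose] at h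
    rw [Nat.factorial_succ, prod_range_succ, pow_succ]
    calc (2 * (k + 1)).choose (k + 1) * ((k + 1) * k !)
        = (k + 1) * (2 * (k + 1)).choose (k + 1) * k ! := by ring
      _ = 2 * (2 * k + 1) * ((2 * k).choose k * k !) := by rw [h]; ring
      _ = _ := by rw [ih]; ring

lemma neg_four_pow_mul_descFactorial_mul_ascFactorial {m k : ℕ} (hk : k ≤ m) :
    (-4 : ℚ) ^ k * m.descFactorial k * (m + 1).ascFactorial k =
      ∏ j ∈ range k, ((2 * j + 1) ^ 2 - (2 * m + 1) ^ 2 : ℚ) := by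
  induction k with
  | zero => simp
  | succ k ih =>
    rw [prod_range_succ, ← ih (by omega), Nat.descFactorial_succ, Nat.ascFactorial_succ]
    push_cast [Nat.cast_sub (by omega : k ≤ m)]
    ring

lemma legendreCoeff_mul_four_pow_mul_factorial_sq {m k : ℕ} (hk : k ≤ m) :
    legendreCoeff m k * (4 ^ k * k ! ^ 2) =
      ∏ j ∈ range k, ((2 * j + 1) ^ 2 - (2 * m + 1) ^ 2 : ℚ) := by
  rw [← neg_four_pow_mul_descFactorial_mul_ascFactorial hk,
    Nat.descFactorial_eq_factorial_mul_choose, Nat.ascFactorial_eq_factorial_mul_choose,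
    legendreCoeff, neg_pow (4 : ℚ)]
  push_cast
  ring

section padic

variable {p : ℕ} [Fact p.Prime]

lemma padicNorm_intCast_div_natCast_le {a : ℤ} {b n : ℕ} (ha : (p : ℤ) ^ n ∣ a)
    (hb : ¬ p ∣ b) :
    padicNorm p (a / b) ≤ (p : ℚ) ^ (-n : ℤ) := by
  rw [padicNorm.div, (padicNorm.nat_eq_one_iff b).2 hb, div_one]
  exact padicNorm.dvd_iff_norm_le.1 (by exact_mod_cast ha)

lemma pow_dvd_num_of_padicNorm_le {q : ℚ} {n : ℕ} (h : padicNorm p q ≤ (p : ℚ) ^ (-n : ℤ)) :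
    (p : ℤ) ^ n ∣ q.num := by
  have : padicNorm p q.num ≤ padicNorm p q := by
    rw [← Rat.mul_den_eq_num, padicNorm.mul]
    exact mul_le_of_le_one_right (padicNorm.nonneg q) (padicNorm.of_nat _)
  exact_mod_cast padicNorm.dvd_iff_norm_le.2 (this.trans h)

lemma padicNorm_centralBinom_sq_sub_legendreCoeff_le {m k : ℕ} (hp : p = 2 * m + 1)
    (hk₀ : 0 < k) (hk : k ≤ m) :
    padicNorm p ((2 * k).choose k ^ 2 / (k ^ 2 * 16 ^ k) - legendreCoeff m k / k ^ 2)
      ≤ (p : ℚ) ^ (-2 : ℤ) := by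
  have hC : ((2 * k).choose k : ℚ) = 2 ^ k * (∏ j ∈ range k, (2 * j + 1 : ℚ)) / k ! := by
    rw [eq_div_iff (by positivity)]
    exact_mod_cast centralBinom_mul_factorial k
  have hL : legendreCoeff m k = (∏ j ∈ range k, ((2 * j + 1) ^ 2 - (2 * m + 1) ^ 2 : ℚ)) /
      (4 ^ k * k ! ^ 2) := by
    rw [eq_div_iff (by positivity)]
    exact legendreCoeff_mul_four_pow_mul_factorial_sq hk
  have hdvd : (p : ℤ) ^ 2 ∣ ∏ j ∈ range k, (2 * j + 1 : ℤ) ^ 2 -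
      ∏ j ∈ range k, ((2 * j + 1) ^ 2 - (p : ℤ) ^ 2) :=
    (Int.ModEq.prod fun j _ => Int.modEq_iff_dvd.2 ⟨1, by ring⟩).dvd
  have hcop : ¬ p ∣ (2 ^ k * k ! * k) ^ 2 := by
    have hpp : p.Prime := Fact.out
    rw [← hpp.coprime_iff_not_dvd]
    have h2 : p.Coprime 2 := (Nat.coprime_primes hpp Nat.prime_two).2 (by omega)
    have hfact : p.Coprime k ! := hpp.coprime_factorial_of_lt (by omega)
    have hk' : p.Coprime k := Nat.coprime_of_lt_prime hk₀.ne' (by omega) hpp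
    exact .pow_right 2 (.mul_right (.mul_right (.pow_right k h2) hfact) hk')
  have key : ((2 * k).choose k : ℚ) ^ 2 / (k ^ 2 * 16 ^ k) - legendreCoeff m k / k ^ 2 =
      ((∏ j ∈ range k, (2 * j + 1 : ℤ) ^ 2 - ∏ j ∈ range k, ((2 * j + 1) ^ 2 - (p : ℤ) ^ 2) :
        ℤ) : ℚ) / ((2 ^ k * k ! * k) ^ 2 : ℕ) := by
    rw [hC, hL, hp]
    push_cast
    have : (k : ℚ) ≠ 0 := by positivity
    rw [prod_pow, show (16 : ℚ) = 2 ^ 4 by norm_num, show (4 : ℚ) = 2 ^ 2 by norm_num, ← pow_mul,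
      ← pow_mul]
    field_simp
    ring
  rw [key]
  exact_mod_cast padicNorm_intCast_div_natCast_le (n := 2) hdvd hcop

lemma padicNorm_centralBinom_sq_div_le {m k : ℕ} (hp : p = 2 * m + 1) (hmk : m < k)
    (hk : k < p) :
    padicNorm p ((2 * k).choose k ^ 2 / (k ^ 2 * 16 ^ k)) ≤ (p : ℚ) ^ (-2 : ℤ) := by
  have hpp : p.Prime := Fact.out
  have hdvd : p ∣ (2 * k).choose k := by
    have := hpp.dvd_choose_add hk hk (by omega)
    rwa [← two_mul] at this
  have hcop : ¬ p ∣ k ^ 2 * 2 ^ (4 * k) := by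
    rw [← hpp.coprime_iff_not_dvd]
    have h2 : p.Coprime 2 := (Nat.coprime_primes hpp Nat.prime_two).2 (by omega)
    have hk' : p.Coprime k := Nat.coprime_of_lt_prime (by omega) hk hpp
    exact .mul_right (.pow_right 2 hk') (.pow_right _ h2)
  have key : ((2 * k).choose k ^ 2 / (k ^ 2 * 16 ^ k) : ℚ) =
      (((2 * k).choose k ^ 2 : ℤ) : ℚ) / (k ^ 2 * 2 ^ (4 * k) : ℕ) := by
    push_cast
    rw [pow_mul]
    norm_num
  rw [key]
  exact_mod_cast padicNorm_intCast_div_natCast_le (n := 2)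
    (pow_dvd_pow_of_dvd (Int.natCast_dvd_natCast.2 hdvd) 2) hcop

end padic

end SunCongruence

open SunCongruence

/-- For a prime `p > 3`,
`∑_{k=1}^{p-1} C(2k,k)^2 / (k^2 * 16^k) ≡ -2 * H_{(p-1)/2}^2 (mod p^2)`,
where `H_n = ∑_{j=1}^n 1/j`. The congruence between rationals means `p^2`
divides the numerator of the difference written in lowest terms. -/
theorem sun_lemma_2_4a (p : ℕ) (hp : p.Prime) (hp3 : 3 < p) :
    (p : ℤ) ^ 2 ∣
      ((∑ k ∈ Finset.Icc 1 (p - 1),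
          ((2 * k).choose k : ℚ) ^ 2 / ((k : ℚ) ^ 2 * 16 ^ k))
        - (-2 * (∑ j ∈ Finset.Icc 1 ((p - 1) / 2), (1 : ℚ) / (j : ℚ)) ^ 2)).num := by
  have := Fact.mk hp
  obtain ⟨m, hm⟩ := hp.odd_of_ne_two (by omega)
  have hhalf : (p - 1) / 2 = m := by omega
  simp only [hhalf, one_div, ← harmonic_eq_sum_Icc, ← sum_legendreCoeff_div_sq]
  set f : ℕ → ℚ := fun k => ((2 * k).choose k : ℚ) ^ 2 / ((k : ℚ) ^ 2 * 16 ^ k)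
  have hsplit : ∑ k ∈ Icc 1 (p - 1), f k - ∑ k ∈ Icc 1 m, legendreCoeff m k / k ^ 2
      = ∑ k ∈ Icc 1 m, (f k - legendreCoeff m k / k ^ 2) + ∑ k ∈ Ioc m (p - 1), f k := by
    have hIcc (n : ℕ) : Icc 1 n = Ioc 0 n := Icc_add_one_left_eq_Ioc 0 n
    rw [sum_sub_distrib, hIcc, hIcc,
      ← sum_Ioc_consecutive f (Nat.zero_le m) (by omega : m ≤ p - 1)]
    ring
  refine pow_dvd_num_of_padicNorm_le (n := 2) ?_
  rw [hsplit]
  refine padicNorm.nonarchimedean.trans <| max_le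
    (padicNorm.sum_le' (fun k hk => ?_) (by positivity))
    (padicNorm.sum_le' (fun k hk => ?_) (by positivity))
  · exact padicNorm_centralBinom_sq_sub_legendreCoeff_le hm (mem_Icc.1 hk).1 (mem_Icc.1 hk).2
  · exact padicNorm_centralBinom_sq_div_le hm (mem_Ioc.1 hk).1
      (Nat.lt_of_le_pred hp.pos (mem_Ioc.1 hk).2)
end

section
/- Let p > 3 be a prime. Then the sum over k from 1 to p-1 of binom(2k,k)^2 / (k^3 * 16^k) is congruent to -(4/3)*H_{(p-1)/2}^3 - (2/3)*H_{(p-1)/2}^{(3)} modulo p, where H_n = sum_{j=1}^n 1/j and H_n^{(3)} = sum_{j=1}^n 1/j^3. -/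
/-!
Write `m = (p - 1) / 2` and `c_k = C(m, k) C(m + k, k)`. As `2m + 1 ≡ 0 (mod p)`, for `k < p`
we have `C(2k, k) ≡ (-4)^k C(m, k)` and `C(m + k, k) ≡ (-1)^k C(m, k)`, so
`C(2k, k)^2 ≡ 16^k (-1)^k c_k`. Hence the sum on the left differs from
`∑_{k=1}^m (-1)^k c_k / k^3` by a sum of fractions whose numerators are divisible by `p` and whose
denominators are prime to `p`, and it remains to prove the exact identity
`∑_{k=1}^m (-1)^k c_k / k^3 = -(4/3) H_m^3 - (2/3) H_m^{(3)}`.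
Its two sides are the coefficients of `x^3` in the partial fraction expansion
`∏_{j=1}^m (j - x) / (j + x) = 1 + ∑_{k=1}^m (-1)^k c_k x / (x + k)`: modulo `x^4` the left side is
`∏_j (1 - 2x/j + 2x²/j² - 2x³/j³) = 1 - 2H_m x + 2H_m² x² - ((4/3) H_m³ + (2/3) H_m^{(3)}) x³`.
-/

open Finset Polynomial
open scoped Nat

theorem prod_Icc_one_add_eq_ascFactorial (m i : ℕ) :
    ∏ j ∈ Icc 1 m, (j + i) = (i + 1).ascFactorial m := by
  induction m with
  | zero => simp
  | succ m ih => rw [prod_Icc_succ_top (by omega), ih, Nat.ascFactorial_succ]; ring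

theorem prod_range_natCast_sub (R : Type*) [CommRing R] (i : ℕ) :
    ∏ j ∈ range i, ((j : R) - i) = (-1) ^ i * i ! := by
  have h := descPochhammer_eval_eq_prod_range i (i : R)
  rw [descPochhammer_eval_eq_descFactorial, Nat.descFactorial_self] at h
  rw [h, show (-1 : R) ^ i = (-1) ^ #(range i) by rw [card_range], pow_card_mul_prod]
  exact prod_congr rfl fun _ _ => by ring

theorem prod_erase_range_natCast_sub (R : Type*) [CommRing R] {i m : ℕ} (him : i ≤ m) :
    ∏ j ∈ (range (m + 1)).erase i, ((j : R) - i) = (-1) ^ i * i ! * (m - i)! := by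
  induction m, him using Nat.le_induction with
  | base =>
    rw [range_add_one, erase_insert notMem_range_self, prod_range_natCast_sub, Nat.sub_self,
      Nat.factorial_zero, Nat.cast_one, mul_one]
  | succ m him ih =>
    rw [range_add_one, erase_insert_of_ne (by omega), prod_insert (by simp), ih,
      Nat.succ_sub him, Nat.factorial_succ]
    push_cast [Nat.cast_sub him]
    ring

theorem choose_mul_choose_add_mul_factorial {m i : ℕ} (him : i ≤ m) :
    m.choose i * (m + i).choose i * (i ! * (m - i)!) = (i + 1).ascFactorial m := by
  have h1 := Nat.choose_mul_factorial_mul_factorial him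
  have h2 := Nat.choose_mul_factorial_mul_factorial (Nat.le_add_left i m)
  rw [Nat.add_sub_cancel] at h2
  apply Nat.eq_of_mul_eq_mul_left i.factorial_pos
  rw [Nat.factorial_mul_ascFactorial, add_comm i m, ← h2, ← h1]
  ring

theorem prod_natCast_sub_X_eq_sum (K : Type*) [Field K] [CharZero K] (m : ℕ) :
    ∏ j ∈ Icc 1 m, ((j : K[X]) - X) =
      ∑ k ∈ range (m + 1), ((-1) ^ k * (m.choose k * (m + k).choose k) : K[X]) *
        ∏ j ∈ (range (m + 1)).erase k, (X + (j : K[X])) := by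
  have hinj : Set.InjOn (fun i : ℕ => -(i : K)) (range (m + 1)) :=
    fun i _ j _ h => by simpa using h
  have hdeg : (∏ j ∈ Icc 1 m, ((j : K[X]) - X)).degree < (#(range (m + 1)) : WithBot ℕ) := by
    have h1 (j : ℕ) : ((j : K[X]) - X).degree = 1 := by
      rw [← neg_sub, degree_neg, ← map_natCast C, degree_X_sub_C]
    rw [degree_prod, sum_congr rfl fun j _ => h1 j, sum_const, Nat.card_Icc, card_range,
      Nat.add_sub_cancel, nsmul_one]
    exact_mod_cast Nat.lt_succ_self m
  rw [Lagrange.eq_interpolate hinj hdeg, Lagrange.interpolate_apply]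
  refine sum_congr rfl fun i hi => ?_
  have him : i ≤ m := Nat.lt_succ_iff.mp (mem_range.mp hi)
  have heval : (∏ j ∈ Icc 1 m, ((j : K[X]) - X)).eval (-(i : K)) =
      ((i + 1).ascFactorial m : K) := by
    rw [← prod_Icc_one_add_eq_ascFactorial, eval_prod]
    push_cast
    exact prod_congr rfl fun j _ => by simp
  have hnodes : ∏ j ∈ (range (m + 1)).erase i, (-(i : K) - -(j : K)) =
      (-1) ^ i * i ! * (m - i)! := by
    rw [← prod_erase_range_natCast_sub K him]
    exact prod_congr rfl fun j _ => by ring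
  have hweight : ((i + 1).ascFactorial m : K) * ((-1) ^ i * i ! * (m - i)! : K)⁻¹ =
      (-1) ^ i * (m.choose i * (m + i).choose i) := by
    have hne : ((-1) ^ i * i ! * (m - i)! : K) ≠ 0 := by simp [Nat.factorial_ne_zero]
    have hsq : ((-1 : K) ^ i) ^ 2 = 1 := by rw [← pow_mul, pow_mul', neg_one_sq, one_pow]
    rw [mul_inv_eq_iff_eq_mul₀ hne, ← choose_mul_choose_add_mul_factorial him]
    push_cast
    linear_combination (-(m.choose i * (m + i).choose i * (i ! * (m - i)!) : K)) * hsq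
  simp only [Lagrange.basis, Lagrange.basisDivisor, prod_mul_distrib, ← map_prod, heval]
  rw [prod_inv_distrib, hnodes, ← mul_assoc, ← map_mul, hweight]
  simp only [map_mul, map_pow, map_neg, map_one, map_natCast, sub_neg_eq_add]

/-- Partial fractions `∏ (j - x) / ∏ (x + j) = 1 + ∑ (-1)^k c_k x / (x + k)`, cleared of
denominators. -/
theorem prod_natCast_sub_eq_partialFractions {A : Type*} [CommRing A] [Algebra ℚ A] (m : ℕ)
    (x : A) :
    ∏ j ∈ Icc 1 m, ((j : A) - x) = ∏ j ∈ Icc 1 m, (x + j) +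
      ∑ k ∈ Icc 1 m, (-1) ^ k * (m.choose k * (m + k).choose k : A) *
        (x * ∏ j ∈ (Icc 1 m).erase k, (x + j)) := by
  have h := congrArg (aeval x) (prod_natCast_sub_X_eq_sum ℚ m)
  simp only [map_prod, map_sum, map_mul, map_sub, map_add, map_natCast, map_pow, map_neg,
    map_one, aeval_X] at h
  rw [h, show range (m + 1) = insert 0 (Icc 1 m) by ext j; simp; omega, sum_insert (by simp),
    erase_insert (by simp)]
  congr 1
  · simp
  · refine sum_congr rfl fun k hk => ?_
    rw [erase_insert_of_ne (by simp at hk; omega), prod_insert (by simp), Nat.cast_zero, add_zero,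
      mul_assoc]

section Truncated

variable {A : Type*} [CommRing A] {ε : A}

/-! With `t * z = 1`, these are the expansions of `(t - ε) / (t + ε)` and `ε / (t + ε)` modulo
`ε ^ 4`. -/

theorem add_mul_trunc_ratio (hε : ε ^ 4 = 0) {t z : A} (h : t * z = 1) :
    (ε + t) * (1 - 2 * z * ε + 2 * z ^ 2 * ε ^ 2 - 2 * z ^ 3 * ε ^ 3) = t - ε := by
  linear_combination (-2 * ε + 2 * z * ε ^ 2 - 2 * z ^ 2 * ε ^ 3) * h - 2 * z ^ 3 * hε

theorem add_mul_trunc_frac (hε : ε ^ 4 = 0) {t z : A} (h : t * z = 1) :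
    (ε + t) * (z * ε - z ^ 2 * ε ^ 2 + z ^ 3 * ε ^ 3) = ε := by
  linear_combination (ε - z * ε ^ 2 + z ^ 2 * ε ^ 3) * h + z ^ 3 * hε

theorem prod_trunc_ratio (hε : ε ^ 4 = 0) {θ : A} (hθ : 3 * θ = 1) {ι : Type*} (s : Finset ι)
    (z : ι → A) :
    ∏ j ∈ s, (1 - 2 * z j * ε + 2 * z j ^ 2 * ε ^ 2 - 2 * z j ^ 3 * ε ^ 3) =
      1 - 2 * (∑ j ∈ s, z j) * ε + 2 * (∑ j ∈ s, z j) ^ 2 * ε ^ 2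
        - 2 * θ * (2 * (∑ j ∈ s, z j) ^ 3 + ∑ j ∈ s, z j ^ 3) * ε ^ 3 := by
  induction s using Finset.cons_induction with
  | empty => simp
  | cons a s ha ih =>
    rw [prod_cons, ih, sum_cons, sum_cons]
    set S := ∑ j ∈ s, z j
    set c := -2 * θ * (2 * S ^ 3 + ∑ j ∈ s, z j ^ 3)
    linear_combination
      (-2 * z a * c + 4 * z a ^ 2 * S ^ 2 + 4 * z a ^ 3 * S
        + (2 * z a ^ 2 * c - 4 * z a ^ 3 * S ^ 2) * ε - 2 * z a ^ 3 * c * ε ^ 2) * hε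
      + (4 * S ^ 2 * z a + 4 * S * z a ^ 2 + 2 * z a ^ 3) * ε ^ 3 * hθ

theorem prod_trunc_ratio_eq_one_add_sum [Algebra ℚ A] (hε : ε ^ 4 = 0) (m : ℕ) {z : ℕ → A}
    (hz : ∀ j ∈ Icc 1 m, (j : A) * z j = 1) :
    ∏ j ∈ Icc 1 m, (1 - 2 * z j * ε + 2 * z j ^ 2 * ε ^ 2 - 2 * z j ^ 3 * ε ^ 3) =
      1 + ∑ k ∈ Icc 1 m, (-1) ^ k * (m.choose k * (m + k).choose k : A) *
        (z k * ε - z k ^ 2 * ε ^ 2 + z k ^ 3 * ε ^ 3) := by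
  have hD : IsUnit (∏ j ∈ Icc 1 m, (ε + j)) := IsUnit.prod_iff.mpr fun j hj =>
    IsNilpotent.isUnit_add_right_of_commute ⟨4, hε⟩ (IsUnit.of_mul_eq_one _ (hz j hj))
      (Commute.all _ _)
  have hfrac (k : ℕ) (hk : k ∈ Icc 1 m) : ε * ∏ j ∈ (Icc 1 m).erase k, (ε + j) =
      (∏ j ∈ Icc 1 m, (ε + j)) * (z k * ε - z k ^ 2 * ε ^ 2 + z k ^ 3 * ε ^ 3) := by
    rw [← mul_prod_erase _ (fun j : ℕ => ε + j) hk]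
    nth_rw 1 [← add_mul_trunc_frac hε (hz k hk)]
    ring
  apply hD.mul_left_cancel
  rw [← prod_mul_distrib, prod_congr rfl fun j hj => add_mul_trunc_ratio hε (hz j hj),
    prod_natCast_sub_eq_partialFractions, mul_add, mul_one, mul_sum]
  exact congrArg _ (sum_congr rfl fun k hk => by rw [hfrac k hk]; ring)

end Truncated

theorem coeff_eq_of_mk_X_pow_eq {R : Type*} [CommRing R] {f g : R[X]} {n k : ℕ} (hk : k < n)
    (h : Ideal.Quotient.mk (Ideal.span {X ^ n}) f = Ideal.Quotient.mk _ g) :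
    f.coeff k = g.coeff k := by
  rw [Ideal.Quotient.eq, Ideal.mem_span_singleton, X_pow_dvd_iff] at h
  simpa [sub_eq_zero] using h k hk

theorem alternating_sum_choose_mul_choose_div_pow_three (K : Type*) [Field K] [CharZero K]
    (m : ℕ) :
    ∑ k ∈ Icc 1 m, (-1) ^ k * (m.choose k * (m + k).choose k : K) / k ^ 3 =
      -(4 / 3) * (∑ j ∈ Icc 1 m, 1 / (j : K)) ^ 3 - 2 / 3 * ∑ j ∈ Icc 1 m, 1 / (j : K) ^ 3 := by
  set π := Ideal.Quotient.mk (Ideal.span {(X : K[X]) ^ 4})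
  have hε : π X ^ 4 = 0 := by
    rw [← map_pow]
    exact Ideal.Quotient.eq_zero_iff_mem.mpr (Ideal.mem_span_singleton_self _)
  have hC {a b : K} (h : a * b = 1) : π (C a) * π (C b) = 1 := by
    rw [← map_mul, ← map_mul, h, map_one, map_one]
  set y : ℕ → K := fun j => (j : K)⁻¹
  have hW := prod_trunc_ratio_eq_one_add_sum hε m (z := fun j => π (C (y j))) fun j hj => by
    rw [← map_natCast π, ← map_natCast C]
    exact hC (mul_inv_cancel₀ (Nat.cast_ne_zero.mpr (by simp at hj; omega)))
  have hθ : 3 * π (C 3⁻¹) = 1 := by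
    rw [← map_ofNat π 3, ← map_ofNat C 3]
    exact hC (mul_inv_cancel₀ three_ne_zero)
  rw [prod_trunc_ratio hε hθ] at hW
  have key : π (1 + C (-2 * ∑ j ∈ Icc 1 m, y j) * X + C (2 * (∑ j ∈ Icc 1 m, y j) ^ 2) * X ^ 2
      + C (-2 * 3⁻¹ * (2 * (∑ j ∈ Icc 1 m, y j) ^ 3 + ∑ j ∈ Icc 1 m, y j ^ 3)) * X ^ 3) =
      π (1 + ∑ k ∈ Icc 1 m, C ((-1) ^ k * (m.choose k * (m + k).choose k : K)) *
        (C (y k) * X - C (y k ^ 2) * X ^ 2 + C (y k ^ 3) * X ^ 3)) := by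
    simp only [map_add, map_sub, map_mul, map_pow, map_sum, map_one, map_neg, map_ofNat,
      map_natCast]
    linear_combination hW
  have h3 := coeff_eq_of_mk_X_pow_eq (k := 3) (by norm_num) key
  simp only [coeff_add, coeff_sub, coeff_one, coeff_C_mul, coeff_X_pow, coeff_X,
    finsetSum_coeff] at h3
  norm_num at h3
  calc ∑ k ∈ Icc 1 m, (-1) ^ k * (m.choose k * (m + k).choose k : K) / k ^ 3
      = ∑ k ∈ Icc 1 m, (-1) ^ k * (m.choose k * (m + k).choose k : K) * y k ^ 3 :=
        sum_congr rfl fun k _ => by simp [y, div_eq_mul_inv]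
    _ = _ := h3.symm
    _ = _ := by simp only [y, one_div, inv_pow]; ring

theorem factorial_mul_choose_two_mul (k : ℕ) :
    k ! * (2 * k).choose k = 2 ^ k * ∏ i ∈ range k, (2 * i + 1) := by
  induction k with
  | zero => simp
  | succ k ih =>
    rw [← Nat.centralBinom_eq_two_mul_choose] at ih ⊢
    rw [Nat.factorial_succ, mul_right_comm, Nat.succ_mul_centralBinom_succ, prod_range_succ]
    linear_combination 2 * (2 * k + 1) * ih

section HalfOfMinusOne

variable {R : Type*} [CommRing R] {m : ℕ} (hm : 2 * (m : R) + 1 = 0)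
include hm

theorem factorial_mul_choose_two_mul_eq (k : ℕ) :
    (k ! * (2 * k).choose k : R) = (-4) ^ k * m.descFactorial k := by
  rw [← descPochhammer_eval_eq_descFactorial, descPochhammer_eval_eq_prod_range]
  have h := congrArg (Nat.cast (R := R)) (factorial_mul_choose_two_mul k)
  push_cast at h
  rw [h, show (-4 : R) ^ k = 2 ^ k * (-2) ^ #(range k) by rw [card_range, ← mul_pow]; norm_num,
    mul_assoc, pow_card_mul_prod]
  exact congrArg _ (prod_congr rfl fun i _ => by linear_combination hm)

theorem factorial_mul_choose_add_eq (k : ℕ) :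
    (k ! * (m + k).choose k : R) = (-1) ^ k * m.descFactorial k := by
  rw [← Nat.cast_mul, ← Nat.descFactorial_eq_factorial_mul_choose,
    Nat.add_descFactorial_eq_ascFactorial, Nat.ascFactorial_eq_prod_range,
    ← descPochhammer_eval_eq_descFactorial, descPochhammer_eval_eq_prod_range, Nat.cast_prod,
    show (-1 : R) ^ k = (-1) ^ #(range k) by rw [card_range], pow_card_mul_prod]
  exact prod_congr rfl fun i _ => by push_cast; linear_combination hm

end HalfOfMinusOne

theorem choose_two_mul_sq_modEq {p m : ℕ} (hp : p.Prime) (hm : p = 2 * m + 1) {k : ℕ}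
    (hk : k < p) :
    16 ^ k * (-1) ^ k * (m.choose k * (m + k).choose k : ℤ) ≡ (2 * k).choose k ^ 2 [ZMOD p] := by
  have := Fact.mk hp
  rw [← ZMod.intCast_eq_intCast_iff]
  push_cast
  have hm' : 2 * (m : ZMod p) + 1 = 0 := by
    have h : ((2 * m + 1 : ℕ) : ZMod p) = 0 := by rw [← hm, ZMod.natCast_self]
    exact_mod_cast h
  have hF : (k ! : ZMod p) ≠ 0 := by
    rw [Ne, ZMod.natCast_eq_zero_iff, hp.dvd_factorial]; omega
  have hs : ((-1 : ZMod p) ^ k) ^ 2 = 1 := by rw [← pow_mul, pow_mul', neg_one_sq, one_pow]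
  have h16 : (16 : ZMod p) ^ k = ((-4) ^ k) ^ 2 := by rw [← pow_mul, pow_mul']; norm_num
  refine mul_left_cancel₀ (pow_ne_zero 2 hF) ?_
  calc (k ! : ZMod p) ^ 2 * (16 ^ k * (-1) ^ k * (m.choose k * (m + k).choose k))
      = 16 ^ k * (-1) ^ k * (k ! * m.choose k) * (k ! * (m + k).choose k) := by ring
    _ = 16 ^ k * (-1) ^ k * m.descFactorial k * ((-1) ^ k * m.descFactorial k) := by
      rw [factorial_mul_choose_add_eq hm', Nat.descFactorial_eq_factorial_mul_choose, Nat.cast_mul]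
    _ = ((-4) ^ k * m.descFactorial k) ^ 2 := by
      linear_combination (16 ^ k * (m.descFactorial k : ZMod p) ^ 2) * hs
        + (m.descFactorial k : ZMod p) ^ 2 * h16
    _ = (k ! : ZMod p) ^ 2 * (2 * k).choose k ^ 2 := by
      rw [← factorial_mul_choose_two_mul_eq hm']; ring

theorem Rat.not_dvd_den_of_dvd_num {p : ℕ} (hp : p.Prime) {q : ℚ} (h : (p : ℤ) ∣ q.num) :
    ¬p ∣ q.den := fun hd =>
  hp.one_lt.ne' (Nat.eq_one_of_dvd_coprimes q.reduced (Int.natCast_dvd.mp h) hd)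

theorem Rat.dvd_num_add {p : ℕ} (hp : p.Prime) {q r : ℚ} (hq : (p : ℤ) ∣ q.num)
    (hr : (p : ℤ) ∣ r.num) : (p : ℤ) ∣ (q + r).num := by
  have hpZ : Prime (p : ℤ) := Nat.prime_iff_prime_int.mp hp
  have h : (p : ℤ) ∣ (q + r).num * q.den * r.den := by
    rw [Rat.add_num_den']
    exact dvd_mul_of_dvd_left (dvd_add (dvd_mul_of_dvd_left hq _) (dvd_mul_of_dvd_left hr _)) _
  rcases hpZ.dvd_or_dvd h with h | h
  · rcases hpZ.dvd_or_dvd h with h | h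
    · exact h
    · exact absurd (Int.natCast_dvd_natCast.mp h) (not_dvd_den_of_dvd_num hp hq)
  · exact absurd (Int.natCast_dvd_natCast.mp h) (not_dvd_den_of_dvd_num hp hr)

theorem Rat.dvd_num_intCast_div_natCast {p : ℕ} (hp : p.Prime) {a : ℤ} {b : ℕ}
    (ha : (p : ℤ) ∣ a) (hb : ¬p ∣ b) : (p : ℤ) ∣ ((a : ℚ) / b).num := by
  have hb0 : (b : ℚ) ≠ 0 := Nat.cast_ne_zero.mpr fun h => hb (h ▸ dvd_zero p)
  have h : ((a : ℚ) / b).num * b = a * ((a : ℚ) / b).den := by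
    have h := Rat.mul_den_eq_num ((a : ℚ) / b)
    exact_mod_cast (by rw [← h]; field_simp :
      (((a : ℚ) / b).num : ℚ) * b = a * ((a : ℚ) / b).den)
  rcases (Nat.prime_iff_prime_int.mp hp).dvd_or_dvd (h ▸ dvd_mul_of_dvd_left ha _) with h | h
  · exact h
  · exact absurd (Int.natCast_dvd_natCast.mp h) hb

/-- For a prime `p > 3`,
`∑_{k=1}^{p-1} C(2k,k)^2 / (k^3 * 16^k)
  ≡ -(4/3)*H_{(p-1)/2}^3 - (2/3)*H_{(p-1)/2}^{(3)} (mod p)`,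
where `H_n = ∑_{j=1}^n 1/j` and `H_n^{(3)} = ∑_{j=1}^n 1/j^3`. The congruence
between rationals means `p` divides the numerator of the difference in lowest terms. -/
theorem sun_lemma_2_4b (p : ℕ) (hp : p.Prime) (hp3 : 3 < p) :
    (p : ℤ) ∣
      ((∑ k ∈ Finset.Icc 1 (p - 1),
          ((2 * k).choose k : ℚ) ^ 2 / ((k : ℚ) ^ 3 * 16 ^ k))
        - (-(4 / 3) * (∑ j ∈ Finset.Icc 1 ((p - 1) / 2), (1 : ℚ) / (j : ℚ)) ^ 3
            - (2 / 3) * (∑ j ∈ Finset.Icc 1 ((p - 1) / 2), (1 : ℚ) / (j : ℚ) ^ 3))).num := by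
  obtain ⟨m, hm⟩ : ∃ m, p = 2 * m + 1 := (hp.eq_two_or_odd'.resolve_left (by omega)).exists_bit1
  rw [show (p - 1) / 2 = m by omega, ← alternating_sum_choose_mul_choose_div_pow_three ℚ m,
    sum_subset (Icc_subset_Icc_right (by omega : m ≤ p - 1)) fun k hk hkm => by
      rw [Nat.choose_eq_zero_of_lt (by simp at hk hkm; omega)]; simp,
    ← sum_sub_distrib]
  refine sum_induction _ (fun q : ℚ => (p : ℤ) ∣ q.num) (fun _ _ => Rat.dvd_num_add hp) (by simp)
    fun k hk => ?_
  have hk : 0 < k ∧ k < p := by simp at hk; omega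
  have hden : ¬p ∣ k ^ 3 * 16 ^ k := hp.coprime_iff_not_dvd.mp <| Nat.Coprime.mul_right
    ((Nat.coprime_of_lt_prime hk.1.ne' hk.2 hp).pow_right 3)
    (((Nat.coprime_primes hp Nat.prime_two).mpr (by omega)).pow_right 4 |>.pow_right k)
  convert Rat.dvd_num_intCast_div_natCast hp (choose_two_mul_sq_modEq hp hm hk.2).dvd hden using 2
  have : (k : ℚ) ≠ 0 := by exact_mod_cast hk.1.ne'
  field_simp
  push_cast
  ring
end

section
/- For every nonnegative integer n, the sum over k from 0 to n of binom(2k,k)^2 / ((2k-1) * 16^k) equals -(2n+1) * binom(2n,n)^2 / 16^n. -/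
/-!
With `a n = (2n+1) C(2n,n)² / 16ⁿ`, the recursion `(n+1) C(2n+2,n+1) = 2(2n+1) C(2n,n)` shows that
the summand at `k+1` equals `a k - a (k+1)`, so the sum telescopes; the summand at `0` is `-1 = -a 0`.
-/

open Finset

section

variable {K : Type*} [Field K] [CharZero K]

theorem Nat.centralBinom_succ_cast_eq (n : ℕ) :
    ((n + 1).centralBinom : K) = 2 * (2 * n + 1) / (n + 1) * n.centralBinom := by
  rw [div_mul_eq_mul_div, eq_div_iff n.cast_add_one_ne_zero, mul_comm]
  exact_mod_cast Nat.succ_mul_centralBinom_succ n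

theorem centralBinom_sq_div_eq_sub (n : ℕ) :
    ((n + 1).centralBinom : K) ^ 2 / ((2 * (n + 1 : ℕ) - 1) * 16 ^ (n + 1))
      = (2 * n + 1) * (n.centralBinom : K) ^ 2 / 16 ^ n
        - (2 * (n + 1 : ℕ) + 1) * ((n + 1).centralBinom : K) ^ 2 / 16 ^ (n + 1) := by
  have hodd : (2 * ((n + 1 : ℕ) : K) - 1) = 2 * n + 1 := by push_cast; ring
  have hodd_ne : (2 * n + 1 : K) ≠ 0 := by exact_mod_cast (2 * n).succ_ne_zero
  rw [hodd, Nat.centralBinom_succ_cast_eq]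
  push_cast
  field_simp
  ring

end

/-- For every nonnegative integer `n`,
`∑_{k=0}^n C(2k,k)^2 / ((2k-1) * 16^k) = -(2n+1) * C(2n,n)^2 / 16^n`. -/
theorem sun_identity_1 (n : ℕ) :
    (∑ k ∈ Finset.range (n + 1),
        ((2 * k).choose k : ℚ) ^ 2 / ((2 * (k : ℚ) - 1) * 16 ^ k))
      = -((2 * (n : ℚ) + 1) * ((2 * n).choose n : ℚ) ^ 2 / 16 ^ n) := by
  simp only [← Nat.centralBinom_eq_two_mul_choose]
  rw [sum_range_succ']
  simp only [centralBinom_sq_div_eq_sub]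
  rw [sum_range_sub' (fun k : ℕ => (2 * (k : ℚ) + 1) * (k.centralBinom : ℚ) ^ 2 / 16 ^ k)]
  norm_num [sub_add_eq_add_sub, sub_eq_neg_add]
end

section
/- For every nonnegative integer n, the sum over k from 0 to n of (1 - 4k) * binom(2k,k)^4 / ((2k-1)^4 * 256^k) equals (8n^2 + 4n + 1) * binom(2n,n)^4 / 256^n. -/
/-!
The sum telescopes: the right-hand side `F n` satisfies `F (n + 1) - F n = summand (n + 1)`, which,
after substituting `C(2n+2, n+1) = 2(2n+1)/(n+1) · C(2n, n)`, is an identity of rational functions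
in `n`.
-/

open Finset

lemma Nat.cast_centralBinom_succ {K : Type*} [Field K] [CharZero K] (n : ℕ) :
    ((n + 1).centralBinom : K) = 2 * (2 * n + 1) / (n + 1) * n.centralBinom := by
  rw [div_mul_eq_mul_div, eq_div_iff (Nat.cast_add_one_ne_zero n), mul_comm]
  exact_mod_cast Nat.succ_mul_centralBinom_succ n

def sunTerm (k : ℕ) : ℚ :=
  (1 - 4 * (k : ℚ)) * (k.centralBinom : ℚ) ^ 4 / ((2 * (k : ℚ) - 1) ^ 4 * 256 ^ k)

def sunClosedForm (n : ℕ) : ℚ :=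
  (8 * (n : ℚ) ^ 2 + 4 * n + 1) * (n.centralBinom : ℚ) ^ 4 / 256 ^ n

lemma sunClosedForm_succ_sub (n : ℕ) :
    sunClosedForm (n + 1) - sunClosedForm n = sunTerm (n + 1) := by
  have h2n : (2 * ((n : ℚ) + 1) - 1) = 2 * n + 1 := by ring
  unfold sunClosedForm sunTerm
  rw [Nat.cast_centralBinom_succ]
  push_cast
  rw [h2n]
  field_simp
  ring

lemma sum_range_sunTerm (n : ℕ) : ∑ k ∈ range (n + 1), sunTerm k = sunClosedForm n := by
  rw [sum_range_succ', sum_congr rfl fun k _ => (sunClosedForm_succ_sub k).symm, sum_range_sub]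
  norm_num [sunTerm, sunClosedForm]

/-- For every nonnegative integer `n`,
`∑_{k=0}^n (1-4k) * C(2k,k)^4 / ((2k-1)^4 * 256^k)
  = (8n^2 + 4n + 1) * C(2n,n)^4 / 256^n`. -/
theorem sun_identity_2 (n : ℕ) :
    (∑ k ∈ Finset.range (n + 1),
        (1 - 4 * (k : ℚ)) * ((2 * k).choose k : ℚ) ^ 4 / ((2 * (k : ℚ) - 1) ^ 4 * 256 ^ k))
      = (8 * (n : ℚ) ^ 2 + 4 * (n : ℚ) + 1) * ((2 * n).choose n : ℚ) ^ 4 / 256 ^ n := by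
  simpa only [sunTerm, sunClosedForm, Nat.centralBinom_eq_two_mul_choose] using sum_range_sunTerm n
end

section
/- For every positive integer n, the sum over k from 1 to n of (-1)^k / (k^3 * binom(n,k) * binom(n+k,k)) equals 5 times the sum over k from 1 to n of (-1)^k / (k^3 * binom(2k,k)), plus 2*H_n^{(3)}, where H_n^{(3)} = sum_{j=1}^n 1/j^3. -/
/-!
Zeilberger's WZ method. With `F = aperyTerm` the summand on the left and its WZ mate
`G n k = aperyMate n k = -2 (-1)^k k!^2 (n-k)! / ((n+1)^2 (n+1+k)!)`, one has
`F (n+1) k - F n k = G n k - G n (k-1)`, so passing from `n` to `n + 1` the left-hand side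
changes by the telescoped boundary terms `G n n - G n 0` plus the new term `F (n+1) (n+1)`.
These are exactly `5 (-1)^(n+1) / ((n+1)^3 C(2n+2, n+1)) + 2 / (n+1)^3`, the increment of the
right-hand side.
-/

open Finset Nat

def aperyTerm (n k : ℕ) : ℚ :=
  (-1) ^ k / ((k : ℚ) ^ 3 * (n.choose k : ℚ) * ((n + k).choose k : ℚ))

def aperyMate (n k : ℕ) : ℚ :=
  -2 * (-1) ^ k * (k ! : ℚ) ^ 2 * ((n - k)! : ℚ) / (((n : ℚ) + 1) ^ 2 * ((n + 1 + k)! : ℚ))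

theorem choose_mul_add_choose_mul_factorial {n k : ℕ} (hk : k ≤ n) :
    n.choose k * (n + k).choose k * (k ! * k ! * (n - k)!) = (n + k)! := by
  have h := choose_mul_factorial_mul_factorial (le_add_self : k ≤ n + k)
  rw [Nat.add_sub_cancel, ← choose_mul_factorial_mul_factorial hk] at h
  rw [← h]; ring

theorem aperyTerm_eq_factorial {n k : ℕ} (hk : k ≤ n) :
    aperyTerm n k
      = (-1) ^ k * (k ! : ℚ) ^ 2 * ((n - k)! : ℚ) / ((k : ℚ) ^ 3 * ((n + k)! : ℚ)) := by
  have h : ((n.choose k : ℚ) * ((n + k).choose k : ℚ)) = (n + k)! / (k ! ^ 2 * (n - k)!) := by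
    rw [eq_div_iff (by positivity), ← choose_mul_add_choose_mul_factorial hk]
    push_cast; ring
  rw [aperyTerm, mul_assoc, h, mul_div_assoc', div_div_eq_mul_div, mul_assoc, mul_div_assoc]

theorem aperyTerm_succ_sub_aperyTerm {n j : ℕ} (hj : j < n) :
    aperyTerm (n + 1) (j + 1) - aperyTerm n (j + 1) = aperyMate n (j + 1) - aperyMate n j := by
  obtain ⟨m, rfl⟩ := Nat.exists_eq_add_of_lt hj
  rw [aperyTerm_eq_factorial (by omega), aperyTerm_eq_factorial (by omega), aperyMate, aperyMate,
    show j + m + 1 + 1 - (j + 1) = m + 1 by omega, show j + m + 1 - (j + 1) = m by omega,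
    show j + m + 1 - j = m + 1 by omega,
    show j + m + 1 + 1 + (j + 1) = j + m + 1 + 1 + j + 1 by omega,
    show j + m + 1 + (j + 1) = j + m + 1 + 1 + j by omega]
  simp only [factorial_succ, pow_succ, cast_mul, cast_add, cast_one]
  field_simp
  ring

theorem aperyMate_zero (n : ℕ) : aperyMate n 0 = -2 / ((n : ℚ) + 1) ^ 3 := by
  rw [aperyMate, Nat.sub_zero, Nat.add_zero, factorial_succ]
  push_cast
  field_simp
  ring

theorem aperyMate_self (n : ℕ) :
    aperyMate n n
      = 4 * (-1) ^ (n + 1) / (((n : ℚ) + 1) ^ 3 * ((2 * (n + 1)).choose (n + 1) : ℚ)) := by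
  rw [aperyMate, Nat.sub_self, two_mul, cast_add_choose,
    show n + 1 + (n + 1) = n + 1 + n + 1 by omega]
  simp only [factorial_succ, factorial_zero, pow_succ, cast_mul, cast_add, cast_one]
  field_simp
  ring

theorem aperyTerm_self (n : ℕ) :
    aperyTerm n n = (-1) ^ n / ((n : ℚ) ^ 3 * ((2 * n).choose n : ℚ)) := by
  rw [aperyTerm, choose_self, two_mul, cast_one, mul_one]

theorem sum_aperyTerm_succ (n : ℕ) :
    ∑ k ∈ Icc 1 (n + 1), aperyTerm (n + 1) k
      = ∑ k ∈ Icc 1 n, aperyTerm n k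
        + 5 * ((-1) ^ (n + 1) / (((n + 1 : ℕ) : ℚ) ^ 3 * ((2 * (n + 1)).choose (n + 1) : ℚ)))
        + 2 * (1 / ((n + 1 : ℕ) : ℚ) ^ 3) := by
  have telescope : ∑ k ∈ Icc 1 n, (aperyTerm (n + 1) k - aperyTerm n k)
      = aperyMate n n - aperyMate n 0 := by
    rw [← Ico_add_one_right_eq_Icc, sum_Ico_eq_sum_range, Nat.add_sub_cancel, ← sum_range_sub]
    refine sum_congr rfl fun j hj => ?_
    rw [add_comm 1 j]
    exact aperyTerm_succ_sub_aperyTerm (mem_range.mp hj)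
  rw [sum_sub_distrib, aperyMate_self, aperyMate_zero] at telescope
  rw [sum_Icc_succ_top (by omega), aperyTerm_self]
  push_cast
  linear_combination telescope

theorem sun_lemma_2_3a_general (n : ℕ) :
    (∑ k ∈ Finset.Icc 1 n,
        (-1 : ℚ) ^ k / ((k : ℚ) ^ 3 * (n.choose k : ℚ) * ((n + k).choose k : ℚ)))
      = 5 * (∑ k ∈ Finset.Icc 1 n, (-1 : ℚ) ^ k / ((k : ℚ) ^ 3 * ((2 * k).choose k : ℚ)))
        + 2 * (∑ j ∈ Finset.Icc 1 n, (1 : ℚ) / (j : ℚ) ^ 3) := by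
  induction n with
  | zero => simp
  | succ n ih =>
    change ∑ k ∈ Icc 1 (n + 1), aperyTerm (n + 1) k = _
    change ∑ k ∈ Icc 1 n, aperyTerm n k = _ at ih
    rw [sum_aperyTerm_succ, ih, sum_Icc_succ_top (by omega), sum_Icc_succ_top (by omega)]
    ring

/-- Apéry's identity: for every positive integer `n`,
`∑_{k=1}^n (-1)^k / (k^3 * C(n,k) * C(n+k,k))
  = 5 * ∑_{k=1}^n (-1)^k / (k^3 * C(2k,k)) + 2 * H_n^{(3)}`,
where `H_n^{(3)} = ∑_{j=1}^n 1/j^3`. -/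
theorem sun_lemma_2_3a (n : ℕ) (hn : 0 < n) :
    (∑ k ∈ Finset.Icc 1 n,
        (-1 : ℚ) ^ k / ((k : ℚ) ^ 3 * (n.choose k : ℚ) * ((n + k).choose k : ℚ)))
      = 5 * (∑ k ∈ Finset.Icc 1 n, (-1 : ℚ) ^ k / ((k : ℚ) ^ 3 * ((2 * k).choose k : ℚ)))
        + 2 * (∑ j ∈ Finset.Icc 1 n, (1 : ℚ) / (j : ℚ) ^ 3) :=
  sun_lemma_2_3a_general n
end
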